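/- Let 1 ≤ i_1 < i_2 < ⋯ < i_r be integers (r ≥ 1), α_1,…,α_r positive integers, and work in the polynomial ring S' = K[x_1,…,x_{i_r}]. Set P = ∏_{q=1}^{r} m_q^{[α_q]} ⊆ S'. Then the saturation of P with respect to the maximal graded ideal satisfies (P : (x_1,…,x_{i_r})^∞) = ∏_{q=1}^{r−1} m_q^{[α_q]}, where (P : T^∞) = ⋃_{k ≥ 1} (P : T^k) and the empty product (case r = 1) is S'. -/

import Mathlib

/-!
Write `Q = ∏_{q<r} m_q^{[α_q]}`, so that `P = Q · m_r^{[α_r]}`, where `m_r^{[α_r]}` is the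
Frobenius power `(x_1^α, …, x_n^α)` of the maximal ideal `m`, `n = i_r`, `α = α_r`.
A monomial of degree `nα + 1` has some exponent above `α`, so `m^{nα+1} ⊆ m_r^{[α_r]}` and
`Q ⊆ (P : m^{nα+1})`. Conversely `P ⊆ Q`, and since `i_q < n` for `q < r`, `Q` is generated by
monomials free of `x_n`; hence `f x_n^k ∈ Q` forces `f ∈ Q`.
-/

open MvPolynomial

/-- `(I : T^∞) = ⋃_{k ≥ 1} (I : T^k)`. -/
noncomputable def satIdeal {N : ℕ} {K : Type*} [Field K]
    (I T : Ideal (MvPolynomial (Fin N) K)) : Ideal (MvPolynomial (Fin N) K) :=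
  ⨆ k ∈ {k : ℕ | 1 ≤ k}, Submodule.colon I ((T ^ k : Ideal (MvPolynomial (Fin N) K)) : Set (MvPolynomial (Fin N) K))

namespace MvPolynomial

variable {σ R : Type*} [CommSemiring R]

variable (R) in
def monomialsAvoiding (j : σ) : Submonoid (MvPolynomial σ R) where
  carrier := (monomial · 1) '' {e | e j = 0}
  mul_mem' := by
    rintro _ _ ⟨e, he, rfl⟩ ⟨e', he', rfl⟩
    exact ⟨e + e', by simp_all, by simp [monomial_mul]⟩
  one_mem' := ⟨0, rfl, by simp⟩

theorem X_pow_mem_monomialsAvoiding {l j : σ} (h : l ≠ j) (a : ℕ) :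
    X l ^ a ∈ monomialsAvoiding R j :=
  ⟨Finsupp.single l a, Finsupp.single_eq_of_ne h.symm, X_pow_eq_monomial.symm⟩

theorem mem_span_of_mul_X_pow_mem {j : σ} {S : Set (MvPolynomial σ R)}
    (hS : S ⊆ monomialsAvoiding R j) {f : MvPolynomial σ R} {k : ℕ}
    (h : f * X j ^ k ∈ Ideal.span S) : f ∈ Ideal.span S := by
  obtain ⟨E, hE, rfl⟩ := Set.subset_image_iff.mp hS
  rw [mem_ideal_span_monomial_image] at h ⊢
  intro m hm
  obtain ⟨e, he, hle⟩ := h (m + Finsupp.single j k) (by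
    rwa [mem_support_iff, X_pow_eq_monomial, coeff_mul_monomial, mul_one, ← mem_support_iff])
  refine ⟨e, he, fun l => ?_⟩
  by_cases hl : l = j
  · simp [hl, show e j = 0 from hE he]
  · simpa [Finsupp.single_eq_of_ne hl] using hle l

theorem mem_prod_span_X_pow_of_mul_X_pow_mem {ι : Type*} {F : Finset ι} {s : ι → Set σ}
    {a : ι → ℕ} {j : σ} (hj : ∀ q ∈ F, j ∉ s q) {f : MvPolynomial σ R} {k : ℕ}
    (h : f * X j ^ k ∈ ∏ q ∈ F, Ideal.span ((X · ^ a q) '' s q)) :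
    f ∈ ∏ q ∈ F, Ideal.span ((X · ^ a q) '' s q) := by
  rw [Ideal.prod_span] at h ⊢
  refine mem_span_of_mul_X_pow_mem (fun g hg => ?_) h
  obtain ⟨g, hgF, rfl⟩ := (Set.mem_finsetProd _ _ _).mp hg
  refine prod_mem fun q hq => ?_
  obtain ⟨l, hl, hgl⟩ := hgF hq
  exact hgl ▸ X_pow_mem_monomialsAvoiding (ne_of_mem_of_not_mem hl (hj q hq)) _

theorem pow_idealOfVars_le_span_X_pow [Fintype σ] (a : ℕ) :
    idealOfVars σ R ^ (Fintype.card σ * a + 1) ≤ Ideal.span (Set.range (X · ^ a)) := by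
  have hspan : Set.range (X · ^ a) =
      (monomial · (1 : R)) '' Set.range (Finsupp.single · a : σ → σ →₀ ℕ) := by
    simp [← Set.range_comp, Function.comp_def, X_pow_eq_monomial]
  intro p hp
  rw [hspan, mem_ideal_span_monomial_image]
  intro x hx
  have hdeg := (mem_pow_idealOfVars_iff _ p).mp hp x hx
  obtain ⟨l, -, hl⟩ : ∃ l ∈ Finset.univ, a < x l := by
    refine Finset.exists_lt_of_sum_lt ?_
    simp only [Finset.sum_const, Finset.card_univ, smul_eq_mul, ← Finsupp.degree_eq_sum]
    omega
  exact ⟨Finsupp.single l a, ⟨l, rfl⟩, Finsupp.single_le_iff.mpr hl.le⟩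

end MvPolynomial

section Saturation

variable {N : ℕ} {K : Type*} [Field K]

theorem le_satIdeal_of_mul_pow_le {P Q T : Ideal (MvPolynomial (Fin N) K)} {k : ℕ}
    (hk : 1 ≤ k) (h : Q * T ^ k ≤ P) : Q ≤ satIdeal P T :=
  le_iSup₂_of_le k hk fun _ hf => Submodule.mem_colon.mpr fun _ hg => h (Ideal.mul_mem_mul hf hg)

theorem satIdeal_le_of_mul_pow_mem {P Q T : Ideal (MvPolynomial (Fin N) K)}
    {x : MvPolynomial (Fin N) K} (hx : x ∈ T) (hPQ : P ≤ Q)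
    (hQ : ∀ f k, f * x ^ k ∈ Q → f ∈ Q) : satIdeal P T ≤ Q :=
  iSup₂_le fun k _ f hf => hQ f k (hPQ (Submodule.mem_colon.mp hf _ (Ideal.pow_mem_pow hx k)))

end Saturation

/-- Variables are indexed from `0`: `x_j` is `X l` with `l + 1 = j`. -/
theorem saturation_of_principal_sbt_general {K : Type*} [Field K]
    (r : ℕ) (hr : 1 ≤ r) (i α : ℕ → ℕ)
    (himono : StrictMonoOn i (Set.Icc 1 r)) :
    satIdeal
      (∏ q ∈ Finset.Icc 1 r,
        Ideal.span {g : MvPolynomial (Fin (i r)) K |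
          ∃ l : Fin (i r), (l : ℕ) < i q ∧ g = X l ^ α q})
      (Ideal.span (Set.range (X : Fin (i r) → MvPolynomial (Fin (i r)) K))) =
    ∏ q ∈ Finset.Icc 1 (r - 1),
      Ideal.span {g : MvPolynomial (Fin (i r)) K |
        ∃ l : Fin (i r), (l : ℕ) < i q ∧ g = X l ^ α q} := by
  set I : ℕ → Ideal (MvPolynomial (Fin (i r)) K) := fun q =>
    Ideal.span {g | ∃ l : Fin (i r), (l : ℕ) < i q ∧ g = X l ^ α q}
  have hP : ∏ q ∈ Finset.Icc 1 r, I q = (∏ q ∈ Finset.Icc 1 (r - 1), I q) * I r := by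
    simpa only [Nat.sub_add_cancel hr] using Finset.prod_Icc_succ_top (by omega : 1 ≤ r - 1 + 1) I
  apply le_antisymm
  · rcases Nat.lt_or_ge r 2 with hr2 | hr2
    · simp [Finset.Icc_eq_empty (by omega : ¬1 ≤ r - 1)]
    have hlt : ∀ q ∈ Finset.Icc 1 (r - 1), i q < i r := fun q hq => by
      rw [Finset.mem_Icc] at hq
      exact himono ⟨hq.1, by omega⟩ ⟨hr, le_rfl⟩ (by omega)
    have hn : i r - 1 < i r := by
      have := hlt 1 (Finset.mem_Icc.mpr ⟨le_rfl, by omega⟩)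
      omega
    refine satIdeal_le_of_mul_pow_mem (Ideal.subset_span ⟨⟨i r - 1, hn⟩, rfl⟩)
      (hP ▸ Ideal.mul_le_left) fun f k hf => ?_
    have hI : ∀ q, I q = Ideal.span ((X · ^ α q) '' {l : Fin (i r) | (l : ℕ) < i q}) :=
      fun q => congrArg Ideal.span (by ext; simp [eq_comm])
    simp only [hI] at hf ⊢
    refine mem_prod_span_X_pow_of_mul_X_pow_mem (fun q hq hq' => ?_) hf
    have : i r - 1 < i q := hq'
    have := hlt q hq
    omega
  · have hIr : I r = Ideal.span (Set.range (X · ^ α r)) :=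
      congrArg Ideal.span (by ext; simp [eq_comm])
    have hpow := pow_idealOfVars_le_span_X_pow (σ := Fin (i r)) (R := K) (α r)
    rw [Fintype.card_fin, ← hIr] at hpow
    refine le_satIdeal_of_mul_pow_le (k := i r * α r + 1) le_add_self ?_
    rw [hP]
    exact Ideal.mul_mono_right hpow

/-- In `S' = K[x_1,…,x_{i_r}]` (variables `X l`, `x_j = X l` with `l + 1 = j`), for
`P = ∏_{q=1}^r (x_1^{α_q},…,x_{i_q}^{α_q})` with `1 ≤ i_1 < ⋯ < i_r`, the saturation
with respect to the maximal graded ideal is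
`(P : (x_1,…,x_{i_r})^∞) = ∏_{q=1}^{r-1} (x_1^{α_q},…,x_{i_q}^{α_q})`,
the empty product (case `r = 1`) being `S'`. -/
theorem saturation_of_principal_sbt {K : Type*} [Field K]
    (r : ℕ) (hr : 1 ≤ r) (i α : ℕ → ℕ)
    (hi1 : 1 ≤ i 1) (himono : StrictMonoOn i (Set.Icc 1 r))
    (hα : ∀ q ∈ Finset.Icc 1 r, 1 ≤ α q) :
    satIdeal
      (∏ q ∈ Finset.Icc 1 r,
        Ideal.span {g : MvPolynomial (Fin (i r)) K |
          ∃ l : Fin (i r), (l : ℕ) < i q ∧ g = X l ^ α q})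
      (Ideal.span (Set.range (X : Fin (i r) → MvPolynomial (Fin (i r)) K))) =
    ∏ q ∈ Finset.Icc 1 (r - 1),
      Ideal.span {g : MvPolynomial (Fin (i r)) K |
        ∃ l : Fin (i r), (l : ℕ) < i q ∧ g = X l ^ α q} :=
  saturation_of_principal_sbt_general r hr i α himono
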